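/- arXiv:0902.1328 — 2 statements merged into one kernel-verified Lean document; each statement's English description precedes it below -/
import Mathlib

section
/- Let μ be a probability measure on ℝ with finite first moment and q̄ its tail quantile function (left-continuous inverse of x ↦ μ([x,∞))). Then for every λ ∈ (0,1), AVaR_μ(λ) := (1/λ)∫_0^λ q̄(u) du equals (1/λ)·C_μ(q̄(λ)) + q̄(λ), where C_μ(K) = ∫ (s−K)⁺ μ(ds). -/
open MeasureTheory Set Filter Topology

/-- Tail function `μ([x,∞))`. -/
noncomputable def tailFn (μ : Measure ℝ) (x : ℝ) : ℝ := (μ (Ici x)).toReal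

/-- Tail quantile function: left-continuous inverse of the tail function. -/
noncomputable def tailQ (μ : Measure ℝ) (l : ℝ) : ℝ := sInf {x : ℝ | tailFn μ x < l}

/-- Call function `C_μ(K) = ∫ (s-K)⁺ μ(ds)`. -/
noncomputable def callFn (μ : Measure ℝ) (K : ℝ) : ℝ := ∫ s, max (s - K) 0 ∂μ

/-- Average Value at Risk at level `l`. -/
noncomputable def avar (μ : Measure ℝ) (l : ℝ) : ℝ := (1 / l) * ∫ u in (0 : ℝ)..l, tailQ μ u

/-- Hardy–Littlewood transform of `μ`: the law of `AVaR_μ(ξ)` for `ξ` uniform on `[0,1]`. -/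
noncomputable def hlTransform (μ : Measure ℝ) : Measure ℝ :=
  Measure.map (avar μ) (volume.restrict (Ioc (0 : ℝ) 1))

/-! Because `x ≤ q̄(u) ↔ u ≤ μ̄(x)` for `u ∈ (0,1)`, the quantile function `q̄` pushes Lebesgue
measure on `(0,1)` forward to `μ`. Hence `C_μ(q̄(λ)) = ∫₀¹ (q̄(u) - q̄(λ))⁺ du`, and as `q̄` is
antitone the integrand equals `q̄(u) - q̄(λ)` on `(0,λ]` and vanishes on `(λ,1)`, so
`C_μ(q̄(λ)) = ∫₀^λ q̄(u) du - λ q̄(λ)`. -/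

theorem volume_Iic_inter_Ioo_zero_one {c : ℝ} (hc : c ≤ 1) :
    volume (Iic c ∩ Ioo 0 1) = ENNReal.ofReal c := by
  refine le_antisymm ?_ ?_
  · calc volume (Iic c ∩ Ioo 0 1) ≤ volume (Ioc 0 c) :=
          measure_mono fun u hu => ⟨hu.2.1, hu.1⟩
      _ = ENNReal.ofReal c := by rw [Real.volume_Ioc, sub_zero]
  · calc ENNReal.ofReal c = volume (Ioo 0 c) := by rw [Real.volume_Ioo, sub_zero]
      _ ≤ volume (Iic c ∩ Ioo 0 1) :=
          measure_mono fun u hu => ⟨hu.2.le, hu.1, hu.2.trans_le hc⟩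

section
variable (μ : Measure ℝ) [IsFiniteMeasure μ]

theorem tailFn_antitone : Antitone (tailFn μ) := fun _ _ h =>
  ENNReal.toReal_mono (measure_ne_top μ _) (measure_mono (Ici_subset_Ici.2 h))

theorem tendsto_tailFn_atTop : Tendsto (tailFn μ) atTop (𝓝 0) := by
  have h := tendsto_measure_iInter_atTop (μ := μ) (fun x : ℝ => measurableSet_Ici.nullMeasurableSet)
    (fun _ _ h => Ici_subset_Ici.2 h) ⟨0, measure_ne_top μ _⟩
  have hI : ⋂ x : ℝ, Ici x = ∅ :=
    eq_empty_of_forall_notMem fun y hy => (mem_iInter.1 hy (y + 1)).not_gt (lt_add_one y)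
  rw [hI, measure_empty] at h
  exact (ENNReal.tendsto_toReal ENNReal.zero_ne_top).comp h

theorem nonempty_tailFn_lt {u : ℝ} (hu : 0 < u) : {x | tailFn μ x < u}.Nonempty :=
  ((tendsto_tailFn_atTop μ).eventually_lt_const hu).exists

theorem tendsto_tailFn_nhdsLT (x : ℝ) : Tendsto (tailFn μ) (𝓝[<] x) (𝓝 (tailFn μ x)) := by
  -- continuity from above of `μ` along `Ici r` as `r ↑ x`, i.e. as `r ↓ x` in `ℝᵒᵈ`
  have h := tendsto_measure_biInter_gt (μ := μ) (ι := ℝᵒᵈ) (a := OrderDual.toDual x)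
    (s := fun r => Ici (OrderDual.ofDual r)) (fun _ _ => measurableSet_Ici.nullMeasurableSet)
    (fun _ _ _ hij => Ici_subset_Ici.2 hij)
    ⟨OrderDual.toDual (x - 1), OrderDual.toDual_lt_toDual.2 (sub_one_lt x), measure_ne_top μ _⟩
  have hI : ⋂ r > OrderDual.toDual x, Ici (OrderDual.ofDual r) = Ici x := by
    ext y
    simpa using forall_lt_imp_le_iff_le_of_dense
  rw [hI] at h
  exact (ENNReal.tendsto_toReal (measure_ne_top μ _)).comp h

end

theorem tendsto_tailFn_atBot (μ : Measure ℝ) [IsProbabilityMeasure μ] :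
    Tendsto (tailFn μ) atBot (𝓝 1) := by
  have h := (ENNReal.tendsto_toReal (measure_ne_top μ univ)).comp (tendsto_measure_Ici_atBot μ)
  rwa [measure_univ, ENNReal.toReal_one] at h

section
variable (μ : Measure ℝ) [IsProbabilityMeasure μ] {u : ℝ}

theorem bddBelow_tailFn_lt (hu : u < 1) : BddBelow {x | tailFn μ x < u} := by
  obtain ⟨x₀, hx₀⟩ := eventually_atBot.1 ((tendsto_tailFn_atBot μ).eventually_const_lt hu)
  exact ⟨x₀, fun x hx => le_of_not_ge fun hxx₀ => (hx₀ x hxx₀).not_gt hx⟩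

theorem le_tailQ_iff (hu₀ : 0 < u) (hu₁ : u < 1) {x : ℝ} : x ≤ tailQ μ u ↔ u ≤ tailFn μ x := by
  constructor
  · intro hx
    by_contra! hxu
    obtain ⟨y, hyu, hyx⟩ :=
      (((tendsto_tailFn_nhdsLT μ x).eventually_lt_const hxu).and self_mem_nhdsWithin).exists
    exact hyx.not_ge (hx.trans (csInf_le (bddBelow_tailFn_lt μ hu₁) hyu))
  · intro hux
    refine le_csInf (nonempty_tailFn_lt μ hu₀) fun y hyu => le_of_not_gt fun hyx => ?_
    exact (hux.trans (tailFn_antitone μ hyx.le)).not_gt hyu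

theorem tailQ_antitoneOn : AntitoneOn (tailQ μ) (Ioo 0 1) := fun _ hu _ hv huv =>
  csInf_le_csInf (bddBelow_tailFn_lt μ hv.2) (nonempty_tailFn_lt μ hu.1) fun _ hx => hx.trans_le huv

theorem aemeasurable_tailQ : AEMeasurable (tailQ μ) (volume.restrict (Ioo 0 1)) :=
  aemeasurable_restrict_of_antitoneOn measurableSet_Ioo (tailQ_antitoneOn μ)

theorem map_tailQ_volume_Ioo : (volume.restrict (Ioo 0 1)).map (tailQ μ) = μ := by
  refine (Measure.ext_of_Ici μ _ fun x => ?_).symm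
  have hpre : tailQ μ ⁻¹' Ici x ∩ Ioo 0 1 = Iic (tailFn μ x) ∩ Ioo 0 1 := by
    ext u
    simp only [mem_inter_iff, mem_preimage, mem_Ici, mem_Iic, and_congr_left_iff]
    exact fun hu => le_tailQ_iff μ hu.1 hu.2
  have hx : tailFn μ x ≤ 1 :=
    ENNReal.toReal_le_of_le_ofReal zero_le_one (by simpa using prob_le_one)
  rw [Measure.map_apply_of_aemeasurable (aemeasurable_tailQ μ) measurableSet_Ici,
    Measure.restrict_apply' measurableSet_Ioo, hpre, volume_Iic_inter_Ioo_zero_one hx, tailFn,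
    ENNReal.ofReal_toReal (measure_ne_top μ _)]

theorem integral_comp_tailQ {f : ℝ → ℝ} (hf : AEStronglyMeasurable f μ) :
    ∫ u in Ioo 0 1, f (tailQ μ u) = ∫ s, f s ∂μ := by
  rw [← integral_map (aemeasurable_tailQ μ) (by rwa [map_tailQ_volume_Ioo]), map_tailQ_volume_Ioo]

theorem integrableOn_tailQ (hμ : Integrable id μ) : IntegrableOn (tailQ μ) (Ioo 0 1) := by
  rw [← map_tailQ_volume_Ioo μ] at hμ
  exact (integrable_map_measure aestronglyMeasurable_id (aemeasurable_tailQ μ)).1 hμ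

theorem posPart_tailQ_sub_tailQ {l u : ℝ} (hl : l ∈ Ioo 0 1) (hu : u ∈ Ioo 0 1) :
    max (tailQ μ u - tailQ μ l) 0 = (Ioc 0 l).indicator (fun v => tailQ μ v - tailQ μ l) u := by
  rcases le_or_gt u l with hul | hlu
  · rw [indicator_of_mem (mem_Ioc.2 ⟨hu.1, hul⟩),
      max_eq_left (sub_nonneg.2 (tailQ_antitoneOn μ hu hl hul))]
  · rw [indicator_of_notMem fun h => h.2.not_gt hlu,
      max_eq_right (sub_nonpos.2 (tailQ_antitoneOn μ hl hu hlu.le))]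

theorem callFn_tailQ {l : ℝ} (hl : l ∈ Ioo 0 1) :
    callFn μ (tailQ μ l) = ∫ u in Ioc 0 l, (tailQ μ u - tailQ μ l) := by
  have hf : AEStronglyMeasurable (fun s => max (s - tailQ μ l) 0) μ :=
    (continuous_id.sub continuous_const).max continuous_const |>.aestronglyMeasurable
  rw [callFn, ← integral_comp_tailQ μ hf, setIntegral_congr_fun measurableSet_Ioo
    fun u hu => posPart_tailQ_sub_tailQ μ hl hu, setIntegral_indicator measurableSet_Ioc,
    inter_eq_right.2 (Ioc_subset_Ioo_right hl.2)]

end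

theorem stmt_4 (μ : Measure ℝ) [IsProbabilityMeasure μ] (hμ : Integrable id μ) :
    ∀ l ∈ Ioo (0 : ℝ) 1,
      avar μ l = (1 / l) * callFn μ (tailQ μ l) + tailQ μ l := by
  intro l hl
  have hint : IntegrableOn (tailQ μ) (Ioc 0 l) :=
    (integrableOn_tailQ μ hμ).mono_set (Ioc_subset_Ioo_right hl.2)
  rw [avar, intervalIntegral.integral_of_le hl.1.le, callFn_tailQ μ hl,
    integral_sub hint (integrable_const _), setIntegral_const, Real.volume_real_Ioc_of_le hl.1.le]
  have hl₀ : l ≠ 0 := hl.1.ne'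
  field_simp
  ring
end

section
/- Let (N_t) be a non-negative càdlàg local martingale with N_0 > 0. Then the first time either N or its left limit N_{-} hits 0 equals the first time N itself hits 0: inf{t : N_t = 0 or N_{t−} = 0} = inf{t : N_t = 0}, and N_u = 0 for all u after this time. -/
open MeasureTheory Set Filter Topology
open scoped NNReal

/-- A process is a local martingale if there is a localizing sequence of stopping
times, tending a.s. to infinity, such that each stopped process is a martingale. -/
def IsLocalMartingale {Ω : Type*} {m : MeasurableSpace Ω} (𝒢 : Filtration ℝ≥0 m)
    (N : ℝ≥0 → Ω → ℝ) (ℙ : Measure Ω) : Prop :=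
  ∃ τ : ℕ → Ω → ℝ≥0, (∀ n, IsStoppingTime 𝒢 (fun ω => (τ n ω : WithTop ℝ≥0))) ∧
    (∀ᵐ ω ∂ℙ, Tendsto (fun n => τ n ω) atTop atTop) ∧
    ∀ n, Martingale (MeasureTheory.stoppedProcess N (fun ω => (τ n ω : WithTop ℝ≥0))) 𝒢 ℙ

/-- Right-continuity of paths with existence of left limits (càdlàg). -/
def CadlagPaths {Ω : Type*} (N : ℝ≥0 → Ω → ℝ) : Prop :=
  ∀ ω, (∀ t : ℝ≥0, ContinuousWithinAt (fun s => N s ω) (Ici t) t) ∧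
    ∀ t : ℝ≥0, 0 < t → ∃ l : ℝ, Tendsto (fun s => N s ω) (nhdsWithin t (Iio t)) (nhds l)

/-!
Along the localizing sequence, Fatou's lemma turns the martingale property of the stopped
processes into the supermartingale inequality `E[N_t; A] ≤ E[N_s; A]` for `A ∈ 𝒢_s`.
Optional stopping at the first time of a finite grid at which `N` drops below `ε` then gives
`E[N_q; min_{r ≤ q} N_r < ε] ≤ ε`; letting the grid exhaust a countable dense set `D` and
`ε → 0` shows that almost surely `N_q = 0` at every `q ∈ D` with `inf_{D ∩ [0, q]} N = 0`.
The rest is pathwise: if `N_t = 0` or `N_{t-} = 0`, then `N` comes arbitrarily close to `0` at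
points of `D` just before any later `d ∈ D`, so `N` vanishes on `D ∩ (t, ∞)` and, by
right-continuity, on `(t, ∞)`; right-continuity also puts the first zero of `N` in its zero set.
-/

open scoped ENNReal

def IsAbsorbedAtZeroOn {ι : Type*} [Preorder ι] (D : Set ι) (f : ι → ℝ) : Prop :=
  ∀ q ∈ D, (∀ ε > 0, ∃ r ∈ D, r ≤ q ∧ f r < ε) → f q = 0

lemma Dense.mem_closure_open_inter {X : Type*} [TopologicalSpace X] {D s : Set X} {x : X}
    (hD : Dense D) (hs : IsOpen s) (hx : x ∈ closure s) : x ∈ closure (s ∩ D) :=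
  closure_minimal (hD.open_subset_closure_inter hs) isClosed_closure hx

section Pathwise

variable {f g : ℝ≥0 → ℝ} {D : Set ℝ≥0}

lemma Dense.mem_closure_Ioi_inter (hD : Dense D) (t : ℝ≥0) : t ∈ closure (Ioi t ∩ D) :=
  hD.mem_closure_open_inter isOpen_Ioi (by rw [closure_Ioi' nonempty_Ioi]; exact self_mem_Ici)

lemma IsAbsorbedAtZeroOn.eq_zero_of_tendsto (habs : IsAbsorbedAtZeroOn D f)
    (hrc : ∀ t, ContinuousWithinAt f (Ici t) t) (hD : Dense D) {s : Set ℝ≥0} {t u : ℝ≥0}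
    (hs : t ∈ closure (s ∩ D)) (hf : Tendsto f (𝓝[s] t) (𝓝 0)) (htu : t < u) : f u = 0 := by
  have hzero : ∀ d ∈ D, t < d → f d = 0 := by
    intro d hd htd
    refine habs d hd fun ε hε => ?_
    have := mem_closure_iff_nhdsWithin_neBot.1 hs
    obtain ⟨r, hrε, hrd, hrD⟩ :=
      (((hf.mono_left (nhdsWithin_mono t (inter_subset_left (t := D)))).eventually
        (gt_mem_nhds hε)).and ((Eventually.filter_mono nhdsWithin_le_nhds (Iio_mem_nhds htd)).and
          (eventually_mem_nhdsWithin.mono fun _ hr => hr.2))).exists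
    exact ⟨r, hrD, le_of_lt hrd, hrε⟩
  exact ((hrc u).mono (inter_subset_left.trans Ioi_subset_Ici_self)).eq_const_of_mem_closure
    (hD.mem_closure_Ioi_inter u) fun d hd => hzero d hd.2 (htu.trans hd.1)

lemma IsAbsorbedAtZeroOn.eq_zero_of_le (habs : IsAbsorbedAtZeroOn D f)
    (hrc : ∀ t, ContinuousWithinAt f (Ici t) t) (hD : Dense D) {t u : ℝ≥0} (ht : f t = 0)
    (htu : t ≤ u) : f u = 0 := by
  rcases htu.eq_or_lt with rfl | htu
  · exact ht
  refine habs.eq_zero_of_tendsto hrc hD (hD.mem_closure_Ioi_inter t) ?_ htu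
  simpa [ht] using ((hrc t).mono Ioi_subset_Ici_self).tendsto

lemma IsAbsorbedAtZeroOn.Ioi_subset (habs : IsAbsorbedAtZeroOn D f)
    (hrc : ∀ t, ContinuousWithinAt f (Ici t) t) (hD : Dense D) (hg0 : g 0 ≠ 0)
    (hg : ∀ t, 0 < t → Tendsto f (𝓝[<] t) (𝓝 (g t))) {t : ℝ≥0} (ht : f t = 0 ∨ g t = 0) :
    Ioi t ⊆ {u | f u = 0} := by
  rcases ht with ht | ht
  · exact fun u htu => habs.eq_zero_of_le hrc hD ht (le_of_lt htu)
  · have ht0 : 0 < t := pos_iff_ne_zero.2 (by rintro rfl; exact hg0 ht)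
    have hclosure : t ∈ closure (Iio t ∩ D) := hD.mem_closure_open_inter isOpen_Iio
      (by rw [closure_Iio' (a := t) ⟨0, ht0⟩]; exact self_mem_Iic)
    exact fun u htu => habs.eq_zero_of_tendsto hrc hD hclosure (ht ▸ hg t ht0) htu

lemma eq_zero_csInf_setOf_eq_zero (hrc : ∀ t, ContinuousWithinAt f (Ici t) t)
    (hne : {t | f t = 0}.Nonempty) : f (sInf {t | f t = 0}) = 0 :=
  ((hrc _).mono fun _ hu => csInf_le (OrderBot.bddBelow _) hu).eq_const_of_mem_closure
    (csInf_mem_closure hne (OrderBot.bddBelow _)) fun _ h => h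

lemma IsAbsorbedAtZeroOn.sInf_eq (habs : IsAbsorbedAtZeroOn D f)
    (hrc : ∀ t, ContinuousWithinAt f (Ici t) t) (hD : Dense D) (hg0 : g 0 ≠ 0)
    (hg : ∀ t, 0 < t → Tendsto f (𝓝[<] t) (𝓝 (g t))) :
    sInf {t | f t = 0 ∨ g t = 0} = sInf {t | f t = 0} := by
  have hsub := fun t (ht : f t = 0 ∨ g t = 0) => habs.Ioi_subset hrc hD hg0 hg ht
  rcases eq_empty_or_nonempty {t | f t = 0 ∨ g t = 0} with hZ | ⟨t, ht⟩
  · have hS : {t | f t = 0} = ∅ := eq_empty_of_subset_empty fun t ht => hZ.subset (Or.inl ht)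
    rw [hZ, hS]
  have hne : {t | f t = 0}.Nonempty := nonempty_Ioi.mono (hsub t ht)
  refine le_antisymm (csInf_le_csInf (OrderBot.bddBelow _) hne fun t ht => Or.inl ht) ?_
  refine le_csInf ⟨t, ht⟩ fun u hu => ?_
  exact (csInf_le_csInf (OrderBot.bddBelow _) nonempty_Ioi (hsub u hu)).trans_eq csInf_Ioi

end Pathwise

section Supermartingale

variable {Ω ι κ : Type*} {m : MeasurableSpace Ω} {ℙ : Measure Ω} [LinearOrder ι]
  {𝒢 : Filtration ι m} {X : ι → Ω → ℝ}

/-- The supermartingale inequality, stated with `ℝ≥0∞`-valued integrals so that it asks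
neither for integrability nor for adaptedness. -/
def IsWeakSupermartingale (𝒢 : Filtration ι m) (X : ι → Ω → ℝ) (ℙ : Measure Ω) : Prop :=
  ∀ s t, s ≤ t → ∀ A, MeasurableSet[𝒢 s] A →
    ∫⁻ ω in A, ENNReal.ofReal (X t ω) ∂ℙ ≤ ∫⁻ ω in A, ENNReal.ofReal (X s ω) ∂ℙ

lemma IsWeakSupermartingale.setLIntegral_biUnion_finset_le (hX : IsWeakSupermartingale 𝒢 X ℙ)
    {T : κ → ι} {A : κ → Set Ω} {ε : ℝ} (hA : ∀ k, MeasurableSet[𝒢 (T k)] (A k))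
    (hAX : ∀ k, ∀ᵐ ω ∂ℙ, ω ∈ A k → X (T k) ω ≤ ε) (F : Finset κ) {q : ι}
    (hq : ∀ k ∈ F, T k ≤ q) :
    ∫⁻ ω in ⋃ k ∈ F, A k, ENNReal.ofReal (X q ω) ∂ℙ ≤ ENNReal.ofReal ε * ℙ (⋃ k ∈ F, A k) := by
  classical
  induction F using Finset.induction_on_max_value T generalizing q with
  | empty => simp
  | insert a F _ hmax ih =>
    set U := ⋃ k ∈ F, A k
    have hU : MeasurableSet[𝒢 (T a)] U :=
      F.measurableSet_biUnion fun k hk => 𝒢.mono (hmax k hk) _ (hA k)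
    have hAU : MeasurableSet (A a \ U) := (𝒢.le _ _ (hA a)).diff (𝒢.le _ _ hU)
    have hdisj : Disjoint U (A a \ U) := disjoint_sdiff_right
    have hAX' : ∫⁻ ω in A a \ U, ENNReal.ofReal (X (T a) ω) ∂ℙ
        ≤ ENNReal.ofReal ε * ℙ (A a \ U) := by
      refine (setLIntegral_mono_ae measurable_const.aemeasurable ?_).trans_eq
        (setLIntegral_const _ _)
      filter_upwards [hAX a] with ω h hω using ENNReal.ofReal_le_ofReal (h hω.1)
    rw [Finset.set_biUnion_insert, union_comm, ← union_sdiff_self]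
    calc ∫⁻ ω in U ∪ A a \ U, ENNReal.ofReal (X q ω) ∂ℙ
        ≤ ∫⁻ ω in U ∪ A a \ U, ENNReal.ofReal (X (T a) ω) ∂ℙ :=
          hX _ _ (hq a (Finset.mem_insert_self a F)) _ (hU.union ((hA a).diff hU))
      _ = ∫⁻ ω in U, ENNReal.ofReal (X (T a) ω) ∂ℙ
          + ∫⁻ ω in A a \ U, ENNReal.ofReal (X (T a) ω) ∂ℙ := lintegral_union hAU hdisj
      _ ≤ ENNReal.ofReal ε * ℙ U + ENNReal.ofReal ε * ℙ (A a \ U) := add_le_add (ih hmax) hAX'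
      _ = ENNReal.ofReal ε * ℙ (U ∪ A a \ U) := by rw [measure_union hdisj hAU, mul_add]

lemma IsWeakSupermartingale.setLIntegral_iUnion_le [Countable κ]
    (hX : IsWeakSupermartingale 𝒢 X ℙ) {T : κ → ι} {A : κ → Set Ω} {ε : ℝ}
    (hA : ∀ k, MeasurableSet[𝒢 (T k)] (A k)) (hAX : ∀ k, ∀ᵐ ω ∂ℙ, ω ∈ A k → X (T k) ω ≤ ε)
    {q : ι} (hq : ∀ k, T k ≤ q) :
    ∫⁻ ω in ⋃ k, A k, ENNReal.ofReal (X q ω) ∂ℙ ≤ ENNReal.ofReal ε * ℙ (⋃ k, A k) := by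
  have hmeas : ∀ F : Finset κ, MeasurableSet (⋃ k ∈ F, A k) :=
    fun F => F.measurableSet_biUnion fun k _ => 𝒢.le _ _ (hA k)
  have hdir : Directed (· ⊆ ·) fun F : Finset κ => ⋃ k ∈ F, A k :=
    Monotone.directed_le fun F G hFG => biUnion_subset_biUnion_left hFG
  rw [iUnion_eq_iUnion_finset, ← withDensity_apply _ (MeasurableSet.iUnion hmeas),
    hdir.measure_iUnion, hdir.measure_iUnion, ENNReal.mul_iSup]
  refine iSup_mono fun F => ?_
  rw [withDensity_apply _ (hmeas F)]
  exact hX.setLIntegral_biUnion_finset_le hA hAX F fun k _ => hq k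

theorem IsWeakSupermartingale.ae_isAbsorbedAtZeroOn [IsFiniteMeasure ℙ]
    (hX : IsWeakSupermartingale 𝒢 X ℙ) (hnn : ∀ t ω, 0 ≤ X t ω)
    (hXm : ∀ t, AEStronglyMeasurable[𝒢 t] (X t) ℙ) {D : Set ι} (hD : D.Countable) :
    ∀ᵐ ω ∂ℙ, IsAbsorbedAtZeroOn D fun t => X t ω := by
  set Y := fun t => (hXm t).mk (X t)
  have hYm : ∀ t (ε : ℝ), MeasurableSet[𝒢 t] {ω | Y t ω < ε} :=
    fun t _ => (hXm t).stronglyMeasurable_mk.measurable measurableSet_Iio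
  have hXY : ∀ᵐ ω ∂ℙ, ∀ r ∈ D, X r ω = Y r ω := (ae_ball_iff hD).2 fun r _ => (hXm r).ae_eq_mk
  refine (ae_ball_iff hD).2 fun q _ => ?_
  have : Countable ↥(D ∩ Iic q) := (hD.mono inter_subset_left).to_subtype
  -- on `E`, the infimum of `Y` over `D ∩ [0, q]` vanishes
  set E : Set Ω := ⋂ n : ℕ, ⋃ r : ↥(D ∩ Iic q), {ω | Y r ω < 1 / (n + 1)}
  have hE : MeasurableSet E := .iInter fun n => .iUnion fun r => 𝒢.le _ _ (hYm r _)
  have hint : ∫⁻ ω in E, ENNReal.ofReal (X q ω) ∂ℙ = 0 := by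
    have hlim : Tendsto (fun n : ℕ => ENNReal.ofReal (1 / (n + 1)) * ℙ univ) atTop (𝓝 0) := by
      simpa using ENNReal.Tendsto.mul_const (ENNReal.tendsto_ofReal
        tendsto_one_div_add_atTop_nhds_zero_nat) (Or.inr (measure_ne_top ℙ univ))
    refine le_antisymm (ge_of_tendsto' hlim fun n => ?_) bot_le
    calc ∫⁻ ω in E, ENNReal.ofReal (X q ω) ∂ℙ
        ≤ ∫⁻ ω in ⋃ r : ↥(D ∩ Iic q), {ω | Y r ω < 1 / (n + 1)}, ENNReal.ofReal (X q ω) ∂ℙ :=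
          lintegral_mono_set (iInter_subset _ n)
      _ ≤ ENNReal.ofReal (1 / (n + 1)) * ℙ (⋃ r : ↥(D ∩ Iic q), {ω | Y r ω < 1 / (n + 1)}) := by
          refine hX.setLIntegral_iUnion_le (T := Subtype.val) (fun r => hYm r _)
            (fun r => ?_) fun r => r.2.2
          filter_upwards [(hXm r).ae_eq_mk] with ω h hω
          exact h ▸ le_of_lt hω
      _ ≤ ENNReal.ofReal (1 / (n + 1)) * ℙ univ := by gcongr; exact subset_univ _
  have hzero := (setLIntegral_eq_zero_iff' hE
    ((hXm q).mono (𝒢.le q)).aemeasurable.ennreal_ofReal.restrict).1 hint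
  filter_upwards [hXY, hzero] with ω hXY hzero hsmall
  have hωE : ω ∈ E := mem_iInter.2 fun n => by
    obtain ⟨r, hrD, hrq, hr⟩ := hsmall _ Nat.one_div_pos_of_nat
    exact mem_iUnion.2 ⟨⟨r, hrD, hrq⟩, show Y r ω < _ from hXY r hrD ▸ hr⟩
  exact le_antisymm (ENNReal.ofReal_eq_zero.1 (hzero hωE)) (hnn q ω)

end Supermartingale

section LocalMartingale

variable {Ω : Type*} {m : MeasurableSpace Ω} {ℙ : Measure Ω} {𝒢 : Filtration ℝ≥0 m}
  {N : ℝ≥0 → Ω → ℝ}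

lemma eventually_stoppedProcess_eq {τ : ℕ → Ω → ℝ≥0} {ω : Ω}
    (hω : Tendsto (fun n => τ n ω) atTop atTop) (t : ℝ≥0) :
    ∀ᶠ n in atTop, stoppedProcess N (fun ω => (τ n ω : WithTop ℝ≥0)) t ω = N t ω :=
  (hω.eventually_ge_atTop t).mono fun _ hn => stoppedProcess_eq_of_le (WithTop.coe_le_coe.2 hn)

lemma IsLocalMartingale.aestronglyMeasurable (hloc : IsLocalMartingale 𝒢 N ℙ) (t : ℝ≥0) :
    AEStronglyMeasurable[𝒢 t] (N t) ℙ := by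
  obtain ⟨τ, -, htend, hmart⟩ := hloc
  refine ⟨_, @StronglyMeasurable.limUnder ℕ Ω ℝ (𝒢 t) _ _ atTop _ _ _ _
    fun n => (hmart n).stronglyAdapted t, ?_⟩
  filter_upwards [htend] with ω hω
  exact (tendsto_nhds_of_eventually_eq (eventually_stoppedProcess_eq hω t)).limUnder_eq.symm

lemma IsLocalMartingale.isWeakSupermartingale [IsFiniteMeasure ℙ]
    (hloc : IsLocalMartingale 𝒢 N ℙ) (hnn : ∀ t ω, 0 ≤ N t ω) :
    IsWeakSupermartingale 𝒢 N ℙ := by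
  intro s t hst A hA
  obtain ⟨τ, hτ, htend, hmart⟩ := hloc
  set Z := fun n => stoppedProcess N fun ω => (τ n ω : WithTop ℝ≥0)
  set B := fun n => {ω | (s : WithTop ℝ≥0) < τ n ω}
  have hB : ∀ n, MeasurableSet[𝒢 s] (B n) := fun n => by
    simpa only [B, compl_ofPred, not_le] using (hτ n s).compl
  set G := fun n => (B n).indicator fun ω => ENNReal.ofReal (Z n t ω)
  have hGm : ∀ n, Measurable (G n) := fun n =>
    (((hmart n).stronglyAdapted t).mono (𝒢.le t)).measurable.ennreal_ofReal.indicator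
      (𝒢.le s _ (hB n))
  -- `Z n` is a martingale, and it agrees with `N` at time `s` on `B n`
  have hGA : ∀ n, ∫⁻ ω in A, G n ω ∂ℙ ≤ ∫⁻ ω in A, ENNReal.ofReal (N s ω) ∂ℙ := fun n => by
    have hBA : MeasurableSet[𝒢 s] (B n ∩ A) := (hB n).inter hA
    rw [lintegral_indicator (𝒢.le s _ (hB n)), Measure.restrict_restrict (𝒢.le s _ (hB n)),
      ← ofReal_integral_eq_lintegral_ofReal ((hmart n).integrable t).integrableOn
        (.of_forall fun ω => hnn _ ω), ← (hmart n).setIntegral_eq hst hBA,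
      ofReal_integral_eq_lintegral_ofReal ((hmart n).integrable s).integrableOn
        (.of_forall fun ω => hnn _ ω)]
    refine (setLIntegral_congr_fun (𝒢.le s _ hBA) fun ω hω => ?_).trans_le
      (lintegral_mono_set inter_subset_right)
    rw [stoppedProcess_eq_of_le (τ := fun ω => (τ n ω : WithTop ℝ≥0)) (le_of_lt hω.1)]
  have hlim : ∀ᵐ ω ∂ℙ.restrict A, liminf (fun n => G n ω) atTop = ENNReal.ofReal (N t ω) := by
    filter_upwards [ae_restrict_of_ae htend] with ω hω
    refine (tendsto_nhds_of_eventually_eq ?_).liminf_eq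
    filter_upwards [eventually_stoppedProcess_eq (N := N) hω t, hω.eventually_gt_atTop s]
      with n hZn hsn
    exact (indicator_of_mem (show ω ∈ B n from WithTop.coe_lt_coe.2 hsn) _).trans
      (congrArg _ hZn)
  calc ∫⁻ ω in A, ENNReal.ofReal (N t ω) ∂ℙ
      = ∫⁻ ω in A, liminf (fun n => G n ω) atTop ∂ℙ := (lintegral_congr_ae hlim).symm
    _ ≤ liminf (fun n => ∫⁻ ω in A, G n ω ∂ℙ) atTop :=
        lintegral_liminf_le' fun n => (hGm n).aemeasurable
    _ ≤ ∫⁻ ω in A, ENNReal.ofReal (N s ω) ∂ℙ := liminf_le_of_frequently_le' (.of_forall hGA)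

end LocalMartingale

theorem stmt_15 {Ω : Type*} {m : MeasurableSpace Ω} {ℙ : Measure Ω}
    [IsProbabilityMeasure ℙ] (𝒢 : Filtration ℝ≥0 m) (N Nminus : ℝ≥0 → Ω → ℝ)
    (hloc : IsLocalMartingale 𝒢 N ℙ)
    (hnn : ∀ t ω, 0 ≤ N t ω)
    (hcadlag : CadlagPaths N)
    (c : ℝ) (hc : 0 < c) (h0 : ∀ ω, N 0 ω = c)
    (hNm : ∀ ω, Nminus 0 ω = N 0 ω ∧ ∀ t : ℝ≥0, 0 < t →
      Tendsto (fun s => N s ω) (nhdsWithin t (Iio t)) (nhds (Nminus t ω))) :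
    ∀ᵐ ω ∂ℙ,
      sInf {t : ℝ≥0 | N t ω = 0 ∨ Nminus t ω = 0} = sInf {t : ℝ≥0 | N t ω = 0} ∧
      ({t : ℝ≥0 | N t ω = 0}.Nonempty →
        ∀ u : ℝ≥0, sInf {t : ℝ≥0 | N t ω = 0} ≤ u → N u ω = 0) := by
  obtain ⟨D, hDc, hD⟩ := TopologicalSpace.exists_countable_dense ℝ≥0
  filter_upwards [(hloc.isWeakSupermartingale hnn).ae_isAbsorbedAtZeroOn hnn
    hloc.aestronglyMeasurable hDc] with ω habs
  have hrc := (hcadlag ω).1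
  have hNm0 : Nminus 0 ω ≠ 0 := by rw [(hNm ω).1, h0 ω]; exact hc.ne'
  exact ⟨habs.sInf_eq hrc hD hNm0 (hNm ω).2, fun hne _ hu =>
    habs.eq_zero_of_le hrc hD (eq_zero_csInf_setOf_eq_zero hrc hne) hu⟩
end
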